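/- Let H = ⟨4,5,6⟩ and let n ≥ 11 be odd. Then S(2H + nℕ₀) = {8, 10, 12, 22, n, n+10, n+12, n+22}, and any numerical semigroup H̃ with d₂(H̃) = H, n(H̃) = n, and g(H̃) = 6 + (n−1)/2 equals 2H + nℕ₀ + (n+2k)ℕ₀ for some k ∈ {1, 2, 3}. -/

import Mathlib

/-- A numerical semigroup: a submonoid of ℕ with finite complement. -/
structure NumSemigroup where
  carrier : Set ℕ
  zero_mem : 0 ∈ carrier
  add_mem : ∀ a ∈ carrier, ∀ b ∈ carrier, a + b ∈ carrier
  cofinite : carrierᶜ.Finite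

namespace NumSemigroup

/-- The genus: cardinality of the complement in ℕ. -/
noncomputable def genus (H : NumSemigroup) : ℕ := H.carrierᶜ.ncard

/-- `m` is the least positive element of `H` (so `H` is an `m`-semigroup). -/
def IsMult (H : NumSemigroup) (m : ℕ) : Prop :=
  IsLeast {x | x ∈ H.carrier ∧ 0 < x} m

/-- `c` is the conductor: the least `c` with `c + ℕ ⊆ H`. -/
def IsConductor (H : NumSemigroup) (c : ℕ) : Prop :=
  IsLeast {c | ∀ x, c ≤ x → x ∈ H.carrier} c

/-- `n` is the least odd element of `H`, i.e. `n = n(H)`. -/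
def IsLeastOdd (H : NumSemigroup) (n : ℕ) : Prop :=
  IsLeast {x | x ∈ H.carrier ∧ Odd x} n

end NumSemigroup

/-- `d₂(A) = {h/2 : h ∈ A even}`. -/
def d2 (A : Set ℕ) : Set ℕ := {x | 2 * x ∈ A}

/-- `2A + nℕ₀ = {2h + ni : h ∈ A, i ∈ ℕ₀}`. -/
def doubleAdd (A : Set ℕ) (n : ℕ) : Set ℕ :=
  {x | ∃ h ∈ A, ∃ i : ℕ, x = 2 * h + n * i}

/-- `2A + aℕ₀ + bℕ₀ = {2h + ai + bj : h ∈ A, i, j ∈ ℕ₀}`. -/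
def doubleAdd2 (A : Set ℕ) (a b : ℕ) : Set ℕ :=
  {x | ∃ h ∈ A, ∃ i : ℕ, ∃ j : ℕ, x = 2 * h + a * i + b * j}

/-- The standard basis `S(A) = {m, s₁, …, s_{m-1}}` of an `m`-semigroup,
where `sᵢ = min {h ∈ A : h ≡ i mod m}`. -/
def stdBasis (A : Set ℕ) (m : ℕ) : Set ℕ :=
  insert m {s | ∃ i, 0 < i ∧ i < m ∧ IsLeast {h | h ∈ A ∧ h % m = i} s}

/-- `A` (of genus `g`) is symmetric: `z ∈ A ↔ 2g - 1 - z ∉ A` for all integers `z`. -/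
def SymSgp (A : Set ℕ) (g : ℕ) : Prop :=
  ∀ z : ℤ, (∃ a ∈ A, (a : ℤ) = z) ↔ ¬ ∃ a ∈ A, (a : ℤ) = 2 * (g : ℤ) - 1 - z

/-- The submonoid of ℕ generated by a set, as a set: `⟨a₁,…,a_k⟩`. -/
def genSG (s : Set ℕ) : Set ℕ := (AddSubmonoid.closure s : AddSubmonoid ℕ)


/-!
Write `H = ⟨4, 5, 6⟩ = ℕ \ {1, 2, 3, 7}`. As `n ∈ H`, every element of `2H + nℕ₀` is `2h` or `2h + n`
with `h ∈ H`, so the least element of `2H + nℕ₀` in an even (odd) residue class mod 8 is `2s`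
(`n + 2s`), where `s ∈ {0, 5, 6, 11}` is the least element of `H` in the matching class mod 4.

If `d₂(H̃) = H` and `n = n(H̃)`, the gaps of `H̃` are `2(ℕ \ H)`, the odd numbers below `n`, and the
`n + 2j` with `j ∉ H` missing from `H̃`; hence `g(H̃) = 4 + (n - 1)/2 + #{j ∈ {1, 2, 3, 7} | n + 2j ∉ H̃}`.
So exactly two of `n + 2, n + 4, n + 6, n + 14` are gaps. Since `n + 2k ∈ H̃` with `k ≤ 3` forces
`n + 14 = (n + 2k) + 2(7 - k) ∈ H̃`, exactly one `n + 2k` with `k ∈ {1, 2, 3}` lies in `H̃`, and then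
`H̃ = 2H + nℕ₀ + (n + 2k)ℕ₀`.
-/

theorem genSG_four_five_six : genSG {4, 5, 6} = ({1, 2, 3, 7} : Set ℕ)ᶜ := by
  let T : AddSubmonoid ℕ :=
    { carrier := ({1, 2, 3, 7} : Set ℕ)ᶜ
      zero_mem' := by simp
      add_mem' := by
        intro a b ha hb
        simp only [Set.mem_compl_iff, Set.mem_insert_iff, Set.mem_singleton_iff] at *
        omega }
  refine subset_antisymm (AddSubmonoid.closure_le (S := T).2 ?_) fun x hx => ?_
  · simp [T, Set.insert_subset_iff]
  simp only [Set.mem_compl_iff, Set.mem_insert_iff, Set.mem_singleton_iff] at hx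
  induction x using Nat.strong_induction_on with
  | _ x ih =>
    rcases Nat.eq_zero_or_pos x with rfl | hx0
    · exact zero_mem _
    -- `11 = 5 + 6` is the one element above 7 whose predecessor `11 - 4` is a gap.
    obtain ⟨a, ha, ha0, hax, hxa⟩ : ∃ a ∈ ({4, 5, 6} : Set ℕ), 0 < a ∧ a ≤ x ∧
        ¬(x - a = 1 ∨ x - a = 2 ∨ x - a = 3 ∨ x - a = 7) :=
      if h11 : x = 11 then ⟨5, by simp, by omega, by omega, by omega⟩
      else if h6 : x ≤ 6 then ⟨x, by simp; omega, hx0, le_rfl, by omega⟩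
      else ⟨4, by simp, by omega, by omega, by omega⟩
    rw [← Nat.sub_add_cancel hax]
    exact add_mem (ih _ (by omega) hxa) (AddSubmonoid.subset_closure ha)

theorem mem_genSG_four_five_six {j : ℕ} :
    j ∈ genSG {4, 5, 6} ↔ ¬(j = 1 ∨ j = 2 ∨ j = 3 ∨ j = 7) := by
  simp [genSG_four_five_six]

theorem isLeast_genSG_four_five_six_mod_four {r s : ℕ}
    (hrs : (r, s) ∈ ({(0, 0), (1, 5), (2, 6), (3, 11)} : Set (ℕ × ℕ))) :
    IsLeast {h | h ∈ genSG {4, 5, 6} ∧ h % 4 = r} s := by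
  simp only [Set.mem_insert_iff, Set.mem_singleton_iff, Prod.mk.injEq] at hrs
  simp only [mem_genSG_four_five_six, IsLeast, lowerBounds, Set.mem_ofPred_eq]
  exact ⟨by omega, fun a ha => by omega⟩

section doubleAdd

variable {A : AddSubmonoid ℕ} {n m r s : ℕ}

theorem mem_doubleAdd_iff (hn : n ∈ A) {x : ℕ} :
    x ∈ doubleAdd A n ↔ ∃ h ∈ A, x = 2 * h ∨ x = 2 * h + n := by
  constructor
  · rintro ⟨h, hh, i, rfl⟩
    obtain ⟨q, rfl | rfl⟩ := Nat.even_or_odd' i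
    exacts [⟨h + q • n, add_mem hh (nsmul_mem hn q), Or.inl (by rw [smul_eq_mul]; ring)⟩,
      ⟨h + q • n, add_mem hh (nsmul_mem hn q), Or.inr (by rw [smul_eq_mul]; ring)⟩]
  · rintro ⟨h, hh, rfl | rfl⟩
    exacts [⟨h, hh, 0, by ring⟩, ⟨h, hh, 1, by ring⟩]

theorem isLeast_doubleAdd_even (hno : Odd n) (hn : n ∈ A)
    (hs : IsLeast {h | h ∈ A ∧ h % m = r} s) :
    IsLeast {x | x ∈ doubleAdd A n ∧ x % (2 * m) = 2 * r} (2 * s) := by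
  refine ⟨⟨(mem_doubleAdd_iff hn).2 ⟨s, hs.1.1, Or.inl rfl⟩,
    by rw [Nat.mul_mod_mul_left, hs.1.2]⟩, ?_⟩
  rintro x ⟨hx, hxr⟩
  obtain ⟨h, hh, rfl | rfl⟩ := (mem_doubleAdd_iff hn).1 hx
  · rw [Nat.mul_mod_mul_left, Nat.mul_left_cancel_iff two_pos] at hxr
    exact Nat.mul_le_mul_left 2 (hs.2 ⟨hh, hxr⟩)
  · have h2 : (2 * h + n) % 2 = 2 * r % 2 := Nat.ModEq.of_mul_right m (by rw [Nat.ModEq, hxr,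
      Nat.mul_mod_mul_left, ← hs.1.2, Nat.mod_mod])
    obtain ⟨b, rfl⟩ := hno
    omega

theorem isLeast_doubleAdd_odd (hno : Odd n) (hn : n ∈ A)
    (hs : IsLeast {h | h ∈ A ∧ h % m = r} s) :
    IsLeast {x | x ∈ doubleAdd A n ∧ x % (2 * m) = (n + 2 * r) % (2 * m)} (n + 2 * s) := by
  have hsr : s ≡ r [MOD m] := by rw [Nat.ModEq, ← hs.1.2, Nat.mod_mod]
  refine ⟨⟨(mem_doubleAdd_iff hn).2 ⟨s, hs.1.1, Or.inr (add_comm _ _)⟩,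
    (hsr.mul_left' 2).add_left n⟩, ?_⟩
  rintro x ⟨hx, hxr⟩
  obtain ⟨h, hh, rfl | rfl⟩ := (mem_doubleAdd_iff hn).1 hx
  · have h2 : 2 * h % 2 = (n + 2 * r) % 2 := Nat.ModEq.of_mul_right m hxr
    obtain ⟨b, rfl⟩ := hno
    omega
  · rw [add_comm] at hxr
    have hhr : h ≡ r [MOD m] := (Nat.ModEq.add_left_cancel' n hxr).mul_left_cancel' two_ne_zero
    have := hs.2 ⟨hh, by rw [hhr, ← hs.1.2, Nat.mod_mod]⟩
    omega

end doubleAdd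

theorem stdBasis_doubleAdd_genSG_four_five_six {n : ℕ} (hodd : Odd n) (hn : 11 ≤ n) :
    stdBasis (doubleAdd (genSG {4, 5, 6}) n) 8 = {8, 10, 12, 22, n, n + 10, n + 12, n + 22} := by
  have hnA : n ∈ AddSubmonoid.closure ({4, 5, 6} : Set ℕ) := by
    change n ∈ genSG {4, 5, 6}
    obtain ⟨b, rfl⟩ := hodd
    rw [mem_genSG_four_five_six]
    omega
  have even := fun {r s} h => isLeast_doubleAdd_even (m := 4) hodd hnA
    (isLeast_genSG_four_five_six_mod_four (r := r) (s := s) h)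
  have odd := fun {r s} h => isLeast_doubleAdd_odd (m := 4) hodd hnA
    (isLeast_genSG_four_five_six_mod_four (r := r) (s := s) h)
  have h10 := even (r := 1) (s := 5) (by simp)
  have h12 := even (r := 2) (s := 6) (by simp)
  have h22 := even (r := 3) (s := 11) (by simp)
  have hn0 := odd (r := 0) (s := 0) (by simp)
  have hn10 := odd (r := 1) (s := 5) (by simp)
  have hn12 := odd (r := 2) (s := 6) (by simp)
  have hn22 := odd (r := 3) (s := 11) (by simp)
  simp only [Nat.reduceMul, mul_zero, add_zero] at h10 h12 h22 hn0 hn10 hn12 hn22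
  obtain ⟨b, rfl⟩ := hodd
  ext x
  simp only [stdBasis, Set.mem_insert_iff, Set.mem_singleton_iff, Set.mem_ofPred_eq]
  constructor
  · rintro (rfl | ⟨i, hi0, hi8, hx⟩)
    · simp
    have hi : i = 2 ∨ i = 4 ∨ i = 6 ∨ i = (2 * b + 1) % 8 ∨ i = (2 * b + 1 + 2) % 8 ∨
        i = (2 * b + 1 + 4) % 8 ∨ i = (2 * b + 1 + 6) % 8 := by omega
    rcases hi with rfl | rfl | rfl | rfl | rfl | rfl | rfl
    · simp [h10.unique hx]
    · simp [h12.unique hx]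
    · simp [h22.unique hx]
    · simp [hn0.unique hx]
    · simp [hn10.unique hx]
    · simp [hn12.unique hx]
    · simp [hn22.unique hx]
  · rintro (rfl | rfl | rfl | rfl | rfl | rfl | rfl | rfl)
    · exact Or.inl rfl
    all_goals refine Or.inr ⟨_, ?_, ?_, ‹_›⟩ <;> omega

theorem exists_unique_of_ncard_sep_eq_two {P : ℕ → Prop} (h7 : P 1 ∨ P 2 ∨ P 3 → P 7)
    (h : {j ∈ ({1, 2, 3, 7} : Set ℕ) | ¬P j}.ncard = 2) :
    ∃ k ∈ ({1, 2, 3} : Set ℕ), P k ∧ ∀ j ∈ ({1, 2, 3} : Set ℕ), P j → j = k := by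
  classical
  rw [show {j ∈ ({1, 2, 3, 7} : Set ℕ) | ¬P j} = ↑(({1, 2, 3, 7} : Finset ℕ).filter (¬P ·)) by
    ext; simp, Set.ncard_coe_finset] at h
  by_cases h1 : P 1 <;> by_cases h2 : P 2 <;> by_cases h3 : P 3 <;> by_cases h7' : P 7 <;>
    simp [Finset.filter_insert, Finset.filter_singleton, h1, h2, h3, h7'] at h h7 ⊢

namespace NumSemigroup

variable (S : NumSemigroup)

theorem mul_mem {a : ℕ} (ha : a ∈ S.carrier) (i : ℕ) : a * i ∈ S.carrier := by
  induction i with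
  | zero => simpa using S.zero_mem
  | succ i ih => simpa [mul_add] using S.add_mem _ ih _ ha

theorem doubleAdd2_subset {A : Set ℕ} (hA : A ⊆ d2 S.carrier) {a b : ℕ} (ha : a ∈ S.carrier)
    (hb : b ∈ S.carrier) : doubleAdd2 A a b ⊆ S.carrier := by
  rintro _ ⟨h, hh, i, j, rfl⟩
  exact S.add_mem _ (S.add_mem _ (hA hh) _ (S.mul_mem ha i)) _ (S.mul_mem hb j)

variable {S} {n : ℕ}

theorem IsLeastOdd.exists_eq_add_two_mul (hn : S.IsLeastOdd n) {x : ℕ} (hx : x ∈ S.carrier)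
    (hxo : Odd x) : ∃ j, x = n + 2 * j := by
  have hnx : n ≤ x := hn.2 ⟨hx, hxo⟩
  obtain ⟨a, rfl⟩ := hxo
  obtain ⟨b, rfl⟩ := hn.1.2
  exact ⟨a - b, by omega⟩

theorem IsLeastOdd.compl_carrier_eq (hn : S.IsLeastOdd n) :
    S.carrierᶜ = (2 * ·) '' (d2 S.carrier)ᶜ ∪ ((2 * · + 1) '' Set.Iio (n / 2) ∪
      (n + 2 * ·) '' {j ∈ (d2 S.carrier)ᶜ | n + 2 * j ∉ S.carrier}) := by
  obtain ⟨b, hb⟩ := hn.1.2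
  ext x
  simp only [Set.mem_compl_iff, Set.mem_union, Set.mem_image, Set.mem_Iio, Set.mem_ofPred_eq, d2]
  constructor
  · intro hx
    rcases Nat.even_or_odd' x with ⟨j, rfl | rfl⟩
    · exact Or.inl ⟨j, hx, rfl⟩
    · by_cases hjn : 2 * j + 1 < n
      · exact Or.inr (Or.inl ⟨j, by omega, rfl⟩)
      · obtain ⟨i, hi⟩ : ∃ i, 2 * j + 1 = n + 2 * i := ⟨j - b, by omega⟩
        rw [hi] at hx ⊢
        exact Or.inr (Or.inr ⟨i, ⟨fun h => hx (S.add_mem _ hn.1.1 _ h), hx⟩, rfl⟩)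
  · rintro (⟨j, hj, rfl⟩ | ⟨k, hk, rfl⟩ | ⟨j, ⟨-, hj⟩, rfl⟩)
    · exact hj
    · exact fun h => absurd (hn.2 ⟨h, odd_two_mul_add_one k⟩) (by omega)
    · exact hj

theorem IsLeastOdd.genus_eq (hn : S.IsLeastOdd n) :
    S.genus = (d2 S.carrier)ᶜ.ncard + n / 2 +
      {j ∈ (d2 S.carrier)ᶜ | n + 2 * j ∉ S.carrier}.ncard := by
  have hfin : (d2 S.carrier)ᶜ.Finite :=
    S.cofinite.preimage (Set.injOn_of_injective (mul_right_injective₀ two_ne_zero))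
  have hhigh_fin : ((n + 2 * ·) '' {j ∈ (d2 S.carrier)ᶜ | n + 2 * j ∉ S.carrier}).Finite :=
    (hfin.subset fun _ hj => hj.1).image _
  rw [genus, hn.compl_carrier_eq, Set.ncard_union_eq _ (hfin.image _)
      (((Set.finite_Iio _).image _).union hhigh_fin),
    Set.ncard_union_eq _ ((Set.finite_Iio _).image _) hhigh_fin,
    Set.ncard_image_of_injective _ (mul_right_injective₀ two_ne_zero),
    Set.ncard_image_of_injective _ (fun a b h => by simpa using h),
    Set.ncard_image_of_injective _ (fun a b h => by simpa using h), Set.ncard_Iio_nat, add_assoc]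
  · exact Set.disjoint_left.2 fun _ ⟨k, hk, hkx⟩ ⟨j, _, hjx⟩ => by
      rw [Set.mem_Iio] at hk
      beta_reduce at hkx hjx
      obtain ⟨b, rfl⟩ := hn.1.2
      omega
  · refine Set.disjoint_left.2 fun _ ⟨j, _, hjx⟩ h => ?_
    rcases h with ⟨k, _, hkx⟩ | ⟨k, _, hkx⟩ <;> beta_reduce at hkx hjx
    · omega
    · obtain ⟨b, rfl⟩ := hn.1.2
      omega

theorem IsLeastOdd.subset_doubleAdd2 (hn : S.IsLeastOdd n) (hd2 : d2 S.carrier = genSG {4, 5, 6})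
    {k : ℕ} (hk : k ∈ ({1, 2, 3} : Set ℕ))
    (huniq : ∀ j ∈ ({1, 2, 3} : Set ℕ), n + 2 * j ∈ S.carrier → j = k) :
    S.carrier ⊆ doubleAdd2 (genSG {4, 5, 6}) n (n + 2 * k) := by
  intro x hx
  obtain ⟨j, rfl | rfl⟩ := Nat.even_or_odd' x
  · exact ⟨j, hd2 ▸ hx, 0, 0, by ring⟩
  obtain ⟨j, hj⟩ := hn.exists_eq_add_two_mul hx (odd_two_mul_add_one j)
  rw [hj] at hx ⊢
  by_cases hjH : j ∈ genSG {4, 5, 6}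
  · exact ⟨j, hjH, 1, 0, by ring⟩
  simp only [Set.mem_insert_iff, Set.mem_singleton_iff] at hk huniq
  rw [mem_genSG_four_five_six, not_not] at hjH
  obtain rfl | hj7 := eq_or_ne j 7
  · -- `7 - k ∈ {4, 5, 6}`
    exact ⟨7 - k, mem_genSG_four_five_six.2 (by omega), 0, 1, by omega⟩
  · obtain rfl := huniq j (by omega) hx
    exact ⟨0, mem_genSG_four_five_six.2 (by omega), 0, 1, by ring⟩

theorem eq_doubleAdd2_of_d2_eq (hd2 : d2 S.carrier = genSG {4, 5, 6}) (hn : S.IsLeastOdd n)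
    (hg : S.genus = 6 + (n - 1) / 2) :
    ∃ k ∈ ({1, 2, 3} : Set ℕ), S.carrier = doubleAdd2 (genSG {4, 5, 6}) n (n + 2 * k) := by
  have hgaps : {j ∈ ({1, 2, 3, 7} : Set ℕ) | n + 2 * j ∉ S.carrier}.ncard = 2 := by
    have hcard : ({1, 2, 3, 7} : Set ℕ).ncard = 4 := by simp [Set.ncard_insert_of_notMem]
    have := hn.genus_eq
    rw [hd2, genSG_four_five_six, compl_compl, hg, hcard] at this
    obtain ⟨b, rfl⟩ := hn.1.2
    omega
  have h7 : n + 2 * 1 ∈ S.carrier ∨ n + 2 * 2 ∈ S.carrier ∨ n + 2 * 3 ∈ S.carrier →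
      n + 2 * 7 ∈ S.carrier := by
    have hH : ∀ i ∈ ({4, 5, 6} : Set ℕ), 2 * i ∈ S.carrier := fun i hi =>
      (Set.ext_iff.1 hd2 i).2 (AddSubmonoid.subset_closure hi)
    rintro (h | h | h)
    · simpa using S.add_mem _ h _ (hH 6 (by simp))
    · simpa using S.add_mem _ h _ (hH 5 (by simp))
    · simpa using S.add_mem _ h _ (hH 4 (by simp))
  obtain ⟨k, hk, hkS, huniq⟩ := exists_unique_of_ncard_sep_eq_two h7 hgaps
  exact ⟨k, hk, (hn.subset_doubleAdd2 hd2 hk huniq).antisymm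
    (S.doubleAdd2_subset hd2.superset hn.1.1 hkS)⟩

end NumSemigroup

theorem stmt16 (n : ℕ) (hodd : Odd n) (hn : 11 ≤ n) :
    stdBasis (doubleAdd (genSG {4, 5, 6}) n) 8 =
      {8, 10, 12, 22, n, n + 10, n + 12, n + 22} ∧
    ∀ Ht : NumSemigroup, d2 Ht.carrier = genSG {4, 5, 6} → Ht.IsLeastOdd n →
      Ht.genus = 6 + (n - 1) / 2 →
      ∃ k, k ∈ ({1, 2, 3} : Set ℕ) ∧
        Ht.carrier = doubleAdd2 (genSG {4, 5, 6}) n (n + 2 * k) :=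
  ⟨stdBasis_doubleAdd_genSG_four_five_six hodd hn,
    fun _ hd2 hlo hg => NumSemigroup.eq_doubleAdd2_of_d2_eq hd2 hlo hg⟩
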